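/- Let w ∈ S_n and let d be the number of distinct letters i that are unconfined in every reduced word of w. Then 2^d divides the cardinality of the principal order ideal B(w). -/

import Mathlib

/-- The adjacent transposition `σ_i`, swapping `i` and `i+1` (acting on `ℕ`). -/
def sigmaT (i : ℕ) : Equiv.Perm ℕ := Equiv.swap i (i + 1)

/-- The permutation given by a word (product of simple reflections, composed as functions). -/
def wordProd (s : List ℕ) : Equiv.Perm ℕ := (s.map sigmaT).prod

/-- `s` is a word for `w` in `S_n`: all letters lie in `{1,…,n-1}` and the product is `w`. -/
def IsWord (n : ℕ) (w : Equiv.Perm ℕ) (s : List ℕ) : Prop :=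
  (∀ j ∈ s, 1 ≤ j ∧ j ≤ n - 1) ∧ wordProd s = w

/-- `s` is a reduced word for `w`: a word of minimal length. -/
def IsReducedWord (n : ℕ) (w : Equiv.Perm ℕ) (s : List ℕ) : Prop :=
  IsWord n w s ∧ ∀ t : List ℕ, IsWord n w t → s.length ≤ t.length

/-- The Coxeter length `ℓ(w)`. -/
noncomputable def ell (n : ℕ) (w : Equiv.Perm ℕ) : ℕ :=
  sInf {k | ∃ s : List ℕ, IsWord n w s ∧ s.length = k}

/-- The support of `w`: letters appearing in reduced words of `w`. -/
def supp (n : ℕ) (w : Equiv.Perm ℕ) : Set ℕ :=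
  {i | ∃ s : List ℕ, IsReducedWord n w s ∧ i ∈ s}

/-- Bruhat order: some reduced word of `v` is a subsequence of some reduced word of `w`. -/
def BruhatLE (n : ℕ) (v w : Equiv.Perm ℕ) : Prop :=
  ∃ s t : List ℕ, IsReducedWord n v s ∧ IsReducedWord n w t ∧ s.Sublist t

/-- The principal order ideal `B(w)`, as a type. -/
def IdealB (n : ℕ) (w : Equiv.Perm ℕ) : Type := {v : Equiv.Perm ℕ // BruhatLE n v w}

/-- The Bruhat order restricted to `B(w)`. -/
def IdealLE (n : ℕ) (w : Equiv.Perm ℕ) (a b : IdealB n w) : Prop := BruhatLE n a.1 b.1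

/-- Two relations are isomorphic (order isomorphism of the corresponding ordered sets). -/
def RelIsomorphic {α β : Type*} (ra : α → α → Prop) (rb : β → β → Prop) : Prop :=
  ∃ e : α ≃ β, ∀ a b : α, ra a b ↔ rb (e a) (e b)

/-- `w` is a prism: `B(w) ≅ C₂ × X` for some partially ordered set `X`
(the two-element chain `C₂` realized as `Bool`), with the componentwise order. -/
def IsPrism (n : ℕ) (w : Equiv.Perm ℕ) : Prop :=
  ∃ (X : Type) (rX : X → X → Prop), IsPartialOrder X rX ∧
    RelIsomorphic (IdealLE n w)
      (fun p q : Bool × X => (p.1 ≤ q.1) ∧ rX p.2 q.2)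

/-- `w` belongs to `S_n`: it fixes every point outside `{1,…,n}`. -/
def MemSymm (n : ℕ) (w : Equiv.Perm ℕ) : Prop :=
  ∀ x : ℕ, x ∉ Set.Icc 1 n → w x = x

/-- `i` is unconfined in the word `s`: it appears exactly once, not between two copies
of `i+1` and not between two copies of `i-1`. -/
def Unconfined (i : ℕ) (s : List ℕ) : Prop :=
  s.count i = 1 ∧ ∀ a b : List ℕ, s = a ++ i :: b →
    ¬((i + 1) ∈ a ∧ (i + 1) ∈ b) ∧ ¬((i - 1) ∈ a ∧ (i - 1) ∈ b)

/-- `B(w) ≅ C₂ × B(v)` with the componentwise order. -/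
def IsoC2TimesIdeal (n : ℕ) (w v : Equiv.Perm ℕ) : Prop :=
  RelIsomorphic (IdealLE n w)
    (fun p q : Bool × IdealB n v => (p.1 ≤ q.1) ∧ IdealLE n v p.2 q.2)

/-!
Fix a reduced word `t` of `w`. By Matsumoto's theorem any two reduced words of `w` are linked by
braid moves, and braid moves preserve the set of products of subwords, so `B(w)` is the set of
products of subwords of `t`.

Let `i` be unconfined in `t = a·i·b` and let `Q_k` be the stabiliser of `{0, …, k}`, which contains
every product of letters `≠ k`. For subwords `x, x'` of `a` and `y, y'` of `b` put `g = x'⁻¹ x` and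
`h = y' y⁻¹`; then `x σ_i y = x' σ_i y'` iff `g σ_i = σ_i h`, and `x y = x' y'` iff `g = h`.
Both `g` and `h` lie in `Q_i`, and as `i + 1` and `i - 1` are each missing from `a` or from `b`, one
of them lies in `Q_{i+1}` and one in `Q_{i-1}`. Under either equation, conjugation by
`σ_i ∈ Q_{i-1} ∩ Q_{i+1}` carries these memberships across, so one of `g`, `h` lies in
`Q_{i-1} ∩ Q_i ∩ Q_{i+1}`; it then fixes `i` and `i + 1` and commutes with `σ_i`, which makes the
two equations equivalent. Hence inserting or deleting the letter `i` is a well-defined involution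
of `B(w)`. It flips membership in `Q_i` and keeps membership in `Q_j` for the other letters `j`
occurring once in `t`; so these involutions cut `B(w)` into `2^d` classes of equal size.
-/

open Equiv List Relation

lemma mul_eq_mul_iff_inv_mul_eq_mul_inv {G : Type*} [Group G] {x y x' y' : G} :
    x * y = x' * y' ↔ x'⁻¹ * x = y' * y⁻¹ := by
  rw [← mul_right_inj x'⁻¹, ← mul_left_inj y⁻¹]
  simp [mul_assoc]

lemma mul_mul_eq_mul_mul_iff_inv_mul_mul_eq {G : Type*} [Group G] {x y x' y' s : G} :
    x * (s * y) = x' * (s * y') ↔ x'⁻¹ * x * s = s * (y' * y⁻¹) := by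
  rw [← mul_right_inj x'⁻¹, ← mul_left_inj y⁻¹]
  simp [mul_assoc]

theorem two_pow_card_dvd_card_of_toggles {α ι : Type*} (S : Finset ι) (B : Finset α)
    (p : ι → α → Prop)
    (h : ∀ i ∈ S, ∃ τ : α → α, ∀ v ∈ B, τ v ∈ B ∧ τ (τ v) = v ∧ (p i (τ v) ↔ ¬p i v) ∧
      ∀ j ∈ S, j ≠ i → (p j (τ v) ↔ p j v)) :
    2 ^ S.card ∣ B.card := by
  classical
  induction S using Finset.induction_on generalizing B with
  | empty => simp
  | insert i S hiS ih =>
    obtain ⟨τ, hτ⟩ := h i (Finset.mem_insert_self i S)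
    have hhalf : (B.filter (p i)).card = (B.filter (¬p i ·)).card := by
      refine Finset.card_bij' (fun v _ => τ v) (fun v _ => τ v) ?_ ?_ ?_ ?_ <;>
        simp only [Finset.mem_filter] <;> intro v hv
      · exact ⟨(hτ v hv.1).1, by simpa [(hτ v hv.1).2.2.1] using hv.2⟩
      · exact ⟨(hτ v hv.1).1, by simpa [(hτ v hv.1).2.2.1] using hv.2⟩
      · exact (hτ v hv.1).2.1
      · exact (hτ v hv.1).2.1
    have hrest : 2 ^ S.card ∣ (B.filter (¬p i ·)).card := by
      refine ih _ fun j hj => ?_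
      have hji : i ≠ j := fun h => hiS (h ▸ hj)
      obtain ⟨τ', hτ'⟩ := h j (Finset.mem_insert_of_mem hj)
      refine ⟨τ', fun v hv => ?_⟩
      simp only [Finset.mem_filter] at hv ⊢
      obtain ⟨hmem, hinv, htog, hpres⟩ := hτ' v hv.1
      exact ⟨⟨hmem, by rw [hpres i (Finset.mem_insert_self i S) hji]; exact hv.2⟩, hinv, htog,
        fun k hk => hpres k (Finset.mem_insert_of_mem hk)⟩
    rw [Finset.card_insert_of_notMem hiS, pow_succ, ← Finset.card_filter_add_card_filter_not (p i),
      hhalf, ← two_mul, mul_comm]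
    exact mul_dvd_mul_left 2 hrest

section SimpleTranspositions

@[simp] lemma sigmaT_apply_self (j : ℕ) : sigmaT j j = j + 1 := swap_apply_left _ _

@[simp] lemma sigmaT_apply_succ (j : ℕ) : sigmaT j (j + 1) = j := swap_apply_right _ _

lemma sigmaT_apply_of_ne {j x : ℕ} (h₁ : x ≠ j) (h₂ : x ≠ j + 1) : sigmaT j x = x :=
  swap_apply_of_ne_of_ne h₁ h₂

lemma sigmaT_apply (j x : ℕ) :
    sigmaT j x = if x = j then j + 1 else if x = j + 1 then j else x :=
  swap_apply_def _ _ _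

@[simp] lemma sigmaT_sigmaT (j x : ℕ) : sigmaT j (sigmaT j x) = x := swap_apply_self _ _ _

@[simp] lemma sigmaT_mul_self (j : ℕ) : sigmaT j * sigmaT j = 1 := swap_mul_self _ _

lemma sigmaT_comm {i j : ℕ} (h : i + 2 ≤ j ∨ j + 2 ≤ i) :
    sigmaT i * sigmaT j = sigmaT j * sigmaT i := by
  ext x
  simp only [Perm.mul_apply, sigmaT_apply]
  split_ifs <;> omega

lemma sigmaT_braid (i : ℕ) :
    sigmaT i * (sigmaT (i + 1) * sigmaT i) = sigmaT (i + 1) * (sigmaT i * sigmaT (i + 1)) := by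
  ext x
  simp only [Perm.mul_apply, sigmaT_apply]
  split_ifs <;> omega

@[simp] lemma wordProd_nil : wordProd [] = 1 := rfl

@[simp] lemma wordProd_cons (j : ℕ) (s : List ℕ) : wordProd (j :: s) = sigmaT j * wordProd s := by
  simp [wordProd]

@[simp] lemma wordProd_append (s t : List ℕ) : wordProd (s ++ t) = wordProd s * wordProd t := by
  simp [wordProd]

end SimpleTranspositions

section Inversions

variable {n j : ℕ} {w : Perm ℕ}

def inversions (n : ℕ) (w : Perm ℕ) : Finset (ℕ × ℕ) :=
  (Finset.Icc 1 n ×ˢ Finset.Icc 1 n).filter fun p => p.1 < p.2 ∧ w p.2 < w p.1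

/-- The number of inversions; it is the Coxeter length (`isReducedWord_iff`). -/
def invCount (n : ℕ) (w : Perm ℕ) : ℕ := (inversions n w).card

lemma mem_inversions {p : ℕ × ℕ} :
    p ∈ inversions n w ↔
      (1 ≤ p.1 ∧ p.1 ≤ n) ∧ (1 ≤ p.2 ∧ p.2 ≤ n) ∧ p.1 < p.2 ∧ w p.2 < w p.1 := by
  simp [inversions, and_assoc]

@[simp] lemma invCount_one : invCount n 1 = 0 := by
  simp only [invCount, Finset.card_eq_zero, Finset.eq_empty_iff_forall_notMem, mem_inversions,
    Perm.one_apply]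
  omega

lemma sigmaT_map_mem_erase_inversions (h₁ : 1 ≤ j) (h₂ : j + 1 ≤ n) {p : ℕ × ℕ}
    (hp : p ∈ (inversions n (w * sigmaT j)).erase (j, j + 1)) :
    (sigmaT j p.1, sigmaT j p.2) ∈ (inversions n w).erase (j, j + 1) := by
  simp only [Finset.mem_erase, mem_inversions, Perm.mul_apply, ne_eq, Prod.ext_iff] at hp ⊢
  obtain ⟨hne, hx, hy, hxy, hw⟩ := hp
  refine ⟨?_, ?_, ?_, ?_, hw⟩ <;> simp only [sigmaT_apply] <;> split_ifs <;> omega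

lemma card_erase_inversions_mul_sigmaT (h₁ : 1 ≤ j) (h₂ : j + 1 ≤ n) :
    ((inversions n (w * sigmaT j)).erase (j, j + 1)).card =
      ((inversions n w).erase (j, j + 1)).card := by
  refine Finset.card_bij' (fun p _ => (sigmaT j p.1, sigmaT j p.2))
    (fun p _ => (sigmaT j p.1, sigmaT j p.2))
    (fun p hp => sigmaT_map_mem_erase_inversions h₁ h₂ hp) (fun p hp => ?_) (by simp) (by simp)
  apply sigmaT_map_mem_erase_inversions h₁ h₂
  rwa [mul_assoc, sigmaT_mul_self, mul_one]

lemma invCount_mul_sigmaT_of_lt (h₁ : 1 ≤ j) (h₂ : j + 1 ≤ n) (h : w j < w (j + 1)) :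
    invCount n (w * sigmaT j) = invCount n w + 1 := by
  have hmem : (j, j + 1) ∈ inversions n (w * sigmaT j) := by
    simp only [mem_inversions, Perm.mul_apply, sigmaT_apply_self, sigmaT_apply_succ]
    omega
  have hnotMem : (j, j + 1) ∉ inversions n w := by
    simp only [mem_inversions]
    omega
  rw [invCount, invCount, ← Finset.card_erase_add_one hmem,
    card_erase_inversions_mul_sigmaT h₁ h₂, Finset.erase_eq_of_notMem hnotMem]

lemma invCount_mul_sigmaT_of_gt (h₁ : 1 ≤ j) (h₂ : j + 1 ≤ n) (h : w (j + 1) < w j) :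
    invCount n (w * sigmaT j) + 1 = invCount n w := by
  have := invCount_mul_sigmaT_of_lt (w := w * sigmaT j) h₁ h₂ (by simpa)
  rwa [mul_assoc, sigmaT_mul_self, mul_one, eq_comm] at this

end Inversions

lemma exists_eraseIdx_wordProd_eq_mul_swap {a b : ℕ} (hab : a < b) :
    ∀ s : List ℕ, wordProd s b < wordProd s a →
      ∃ m < s.length, wordProd (s.eraseIdx m) = wordProd s * swap a b
  | [], h => by simp only [wordProd_nil, Perm.coe_one, id_eq] at h; omega
  | j :: s, h => by
    rcases lt_trichotomy (wordProd s a) (wordProd s b) with hlt | heq | hgt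
    · obtain ⟨ha, hb⟩ : wordProd s a = j ∧ wordProd s b = j + 1 := by
        simp only [wordProd_cons, Perm.mul_apply, sigmaT_apply] at h
        split_ifs at h <;> omega
      refine ⟨0, by simp, ?_⟩
      rw [eraseIdx_cons_zero, wordProd_cons, sigmaT, ← hb, ← ha, swap_apply_apply]
      simp [mul_assoc]
    · exact absurd ((wordProd s).injective heq) hab.ne
    · obtain ⟨m, hm, hs⟩ := exists_eraseIdx_wordProd_eq_mul_swap hab s hgt
      exact ⟨m + 1, by simpa using hm, by simp [hs, mul_assoc]⟩

section ReducedWords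

variable {n : ℕ} {w : Perm ℕ} {s : List ℕ}

lemma exists_sublist_length_eq_invCount (hs : ∀ j ∈ s, 1 ≤ j ∧ j ≤ n - 1) :
    ∃ u, u <+ s ∧ wordProd u = wordProd s ∧ u.length = invCount n (wordProd s) := by
  induction s using List.reverseRecOn with
  | nil => exact ⟨[], by simp⟩
  | append_singleton s j ih =>
    obtain ⟨u, hus, hu, hlen⟩ := ih fun i hi => hs i (by simp [hi])
    have hj := hs j (by simp)
    have hprod : wordProd (s ++ [j]) = wordProd s * sigmaT j := by simp
    rcases lt_trichotomy (wordProd s j) (wordProd s (j + 1)) with hlt | heq | hgt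
    · refine ⟨u ++ [j], hus.append_right _, by simp [hu], ?_⟩
      rw [hprod, invCount_mul_sigmaT_of_lt hj.1 (by omega) hlt]
      simp [hlen]
    · exact absurd ((wordProd s).injective heq) (by omega)
    · obtain ⟨m, hm, hum⟩ := exists_eraseIdx_wordProd_eq_mul_swap (lt_add_one j) u (hu ▸ hgt)
      refine ⟨u.eraseIdx m, ((u.eraseIdx_sublist m).trans hus).trans (sublist_append_left _ _),
        by rw [hum, hu, hprod, sigmaT], ?_⟩
      have := invCount_mul_sigmaT_of_gt (n := n) hj.1 (by omega) hgt
      rw [length_eraseIdx, if_pos hm, hprod]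
      omega

lemma invCount_wordProd_le_length (hs : ∀ j ∈ s, 1 ≤ j ∧ j ≤ n - 1) :
    invCount n (wordProd s) ≤ s.length := by
  obtain ⟨u, hus, -, hlen⟩ := exists_sublist_length_eq_invCount hs
  exact hlen ▸ hus.length_le

lemma isReducedWord_iff : IsReducedWord n w s ↔ IsWord n w s ∧ s.length = invCount n w := by
  refine ⟨fun ⟨hs, hmin⟩ => ⟨hs, ?_⟩, fun ⟨hs, hlen⟩ => ⟨hs, fun t ht => ?_⟩⟩
  · obtain ⟨u, hus, hu, hlen⟩ := exists_sublist_length_eq_invCount hs.1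
    have := hmin u ⟨fun j hj => hs.1 j (hus.subset hj), hu.trans hs.2⟩
    have := hus.length_le
    rw [hs.2] at hlen
    omega
  · rw [hlen, ← ht.2]
    exact invCount_wordProd_le_length ht.1

lemma IsWord.exists_isReducedWord_sublist (hs : IsWord n w s) :
    ∃ u, u <+ s ∧ IsReducedWord n w u := by
  obtain ⟨u, hus, hu, hlen⟩ := exists_sublist_length_eq_invCount hs.1
  refine ⟨u, hus, isReducedWord_iff.2 ⟨⟨fun j hj => hs.1 j (hus.subset hj), hu.trans hs.2⟩, ?_⟩⟩
  rw [hlen, hs.2]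

lemma IsWord.concat {a : ℕ} (hs : IsWord n w s) (h₁ : 1 ≤ a) (h₂ : a + 1 ≤ n) :
    IsWord n (w * sigmaT a) (s ++ [a]) := by
  refine ⟨fun j hj => ?_, by simp [hs.2]⟩
  rcases mem_append.1 hj with hj | hj
  · exact hs.1 j hj
  · rw [mem_singleton] at hj
    omega

lemma isReducedWord_concat_iff {a : ℕ} :
    IsReducedWord n w (s ++ [a]) ↔
      IsReducedWord n (w * sigmaT a) s ∧ 1 ≤ a ∧ a + 1 ≤ n ∧ w (a + 1) < w a := by
  constructor
  · rintro hsa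
    obtain ⟨⟨hs, rfl⟩, hlen⟩ := isReducedWord_iff.1 hsa
    have ha := hs a (by simp)
    have hs' : ∀ j ∈ s, 1 ≤ j ∧ j ≤ n - 1 := fun j hj => hs j (by simp [hj])
    have hw : wordProd (s ++ [a]) * sigmaT a = wordProd s := by simp [mul_assoc]
    have hle := invCount_wordProd_le_length hs'
    rw [← hw] at hle
    rw [length_append, length_singleton] at hlen
    have hdesc : wordProd (s ++ [a]) (a + 1) < wordProd (s ++ [a]) a := by
      by_contra! h
      have := invCount_mul_sigmaT_of_lt (n := n) ha.1 (by omega)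
        (h.lt_of_ne ((wordProd _).injective.ne (by omega)))
      omega
    have := invCount_mul_sigmaT_of_gt (n := n) ha.1 (by omega) hdesc
    exact ⟨isReducedWord_iff.2 ⟨⟨hs', hw.symm⟩, by omega⟩, ha.1, by omega, hdesc⟩
  · rintro ⟨hs, ha₁, ha₂, hdesc⟩
    obtain ⟨hs, hlen⟩ := isReducedWord_iff.1 hs
    have := invCount_mul_sigmaT_of_gt ha₁ ha₂ hdesc
    refine isReducedWord_iff.2 ⟨by simpa [mul_assoc] using hs.concat ha₁ ha₂, ?_⟩
    simp only [length_append, length_singleton]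
    omega

end ReducedWords

section BraidMoves

inductive BraidRel : List ℕ → List ℕ → Prop
  | comm {i j : ℕ} (h : i + 2 ≤ j ∨ j + 2 ≤ i) : BraidRel [i, j] [j, i]
  | braid (i : ℕ) : BraidRel [i, i + 1, i] [i + 1, i, i + 1]
  | braid_symm (i : ℕ) : BraidRel [i + 1, i, i + 1] [i, i + 1, i]

inductive BraidMove : List ℕ → List ℕ → Prop
  | mk (c d : List ℕ) {x y : List ℕ} (h : BraidRel x y) : BraidMove (c ++ x ++ d) (c ++ y ++ d)

variable {s t x y : List ℕ}

lemma BraidRel.symm : BraidRel x y → BraidRel y x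
  | .comm h => .comm h.symm
  | .braid i => .braid_symm i
  | .braid_symm i => .braid i

lemma BraidRel.exists_sublist_wordProd_eq (h : BraidRel x y) {u : List ℕ} (hu : u <+ x) :
    ∃ u', u' <+ y ∧ wordProd u' = wordProd u := by
  simp only [← mem_sublists] at hu ⊢
  cases h <;> simp only [sublists, foldr_cons, foldr_nil, flatMap_cons, flatMap_nil, append_nil,
    cons_append, nil_append, mem_cons, not_mem_nil, or_false] at hu
  case comm h => rcases hu with rfl | rfl | rfl | rfl <;> simp [sublists, sigmaT_comm h]
  all_goals
    rcases hu with rfl | rfl | rfl | rfl | rfl | rfl | rfl | rfl <;> simp [sublists, sigmaT_braid]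

lemma BraidRel.braidMove_append_left (c : List ℕ) (h : BraidRel x y) :
    BraidMove (c ++ x) (c ++ y) := by
  simpa using BraidMove.mk c [] h

lemma BraidMove.symm : BraidMove s t → BraidMove t s
  | .mk c d h => .mk c d h.symm

instance : Std.Symm BraidMove := ⟨fun _ _ => BraidMove.symm⟩

lemma BraidMove.append_right (e : List ℕ) : BraidMove s t → BraidMove (s ++ e) (t ++ e)
  | .mk c d h => by simpa using BraidMove.mk c (d ++ e) h

lemma braidEquiv_append_right (e : List ℕ) (h : ReflTransGen BraidMove s t) :
    ReflTransGen BraidMove (s ++ e) (t ++ e) :=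
  ReflTransGen.lift (· ++ e) (fun _ _ => BraidMove.append_right e) _ _ h

open Classical in
noncomputable def subwordProducts (t : List ℕ) : Finset (Perm ℕ) :=
  (t.sublists.map wordProd).toFinset

lemma mem_subwordProducts {v : Perm ℕ} :
    v ∈ subwordProducts t ↔ ∃ u, u <+ t ∧ wordProd u = v := by
  simp [subwordProducts]

lemma BraidMove.subwordProducts_subset : BraidMove s t → subwordProducts s ⊆ subwordProducts t
  | .mk c d h, v, hv => by
    obtain ⟨u, hu, rfl⟩ := mem_subwordProducts.1 hv
    obtain ⟨u₁₂, u₃, rfl, hu₁₂, hu₃⟩ := sublist_append_iff.1 hu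
    obtain ⟨u₁, u₂, rfl, hu₁, hu₂⟩ := sublist_append_iff.1 hu₁₂
    obtain ⟨u₂', hu₂', he⟩ := h.exists_sublist_wordProd_eq hu₂
    exact mem_subwordProducts.2 ⟨u₁ ++ u₂' ++ u₃, (hu₁.append hu₂').append hu₃, by simp [he]⟩

lemma subwordProducts_eq_of_braidEquiv (h : ReflTransGen BraidMove s t) :
    subwordProducts s = subwordProducts t := by
  induction h with
  | refl => rfl
  | tail _ hm ih =>
    exact ih.trans (hm.subwordProducts_subset.antisymm hm.symm.subwordProducts_subset)

end BraidMoves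

section Matsumoto

variable {n a b : ℕ} {w : Perm ℕ} {s t : List ℕ}
  (ih : ∀ v, invCount n v < invCount n w →
    ∀ {s t}, IsReducedWord n v s → IsReducedWord n v t → ReflTransGen BraidMove s t)
include ih

/-- `w` has reduced words `r·b·a` and `r·a·b`, linked to `s·a` and `t·b` by induction. -/
lemma braidEquiv_concat_of_comm (hab : a + 2 ≤ b ∨ b + 2 ≤ a)
    (hs : IsReducedWord n w (s ++ [a])) (ht : IsReducedWord n w (t ++ [b])) :
    ReflTransGen BraidMove (s ++ [a]) (t ++ [b]) := by
  obtain ⟨hs, ha₁, ha₂, ha⟩ := isReducedWord_concat_iff.1 hs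
  obtain ⟨ht, hb₁, hb₂, hb⟩ := isReducedWord_concat_iff.1 ht
  obtain ⟨r, -, hr⟩ := (hs.1.concat hb₁ hb₂).exists_isReducedWord_sublist
  have hrb : IsReducedWord n (w * sigmaT a) (r ++ [b]) :=
    isReducedWord_concat_iff.2 ⟨hr, hb₁, hb₂, by simpa (disch := omega) [sigmaT_apply_of_ne]⟩
  have hra : IsReducedWord n (w * sigmaT b) (r ++ [a]) :=
    isReducedWord_concat_iff.2 ⟨by rwa [mul_assoc, ← sigmaT_comm hab, ← mul_assoc], ha₁, ha₂,
      by simpa (disch := omega) [sigmaT_apply_of_ne]⟩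
  have := invCount_mul_sigmaT_of_gt ha₁ ha₂ ha
  have := invCount_mul_sigmaT_of_gt hb₁ hb₂ hb
  have hmove : BraidMove (r ++ [b] ++ [a]) (r ++ [a] ++ [b]) := by
    simpa using (BraidRel.comm hab.symm).braidMove_append_left r
  exact ((braidEquiv_append_right [a] (ih _ (by omega) hs hrb)).tail hmove).trans
    (braidEquiv_append_right [b] (ih _ (by omega) hra ht))

/-- `w` has reduced words `r·a·(a+1)·a` and `r·(a+1)·a·(a+1)`, linked to `s·a` and `t·(a+1)` by
induction. -/
lemma braidEquiv_concat_of_succ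
    (hs : IsReducedWord n w (s ++ [a])) (ht : IsReducedWord n w (t ++ [a + 1])) :
    ReflTransGen BraidMove (s ++ [a]) (t ++ [a + 1]) := by
  obtain ⟨hs, ha₁, -, ha⟩ := isReducedWord_concat_iff.1 hs
  obtain ⟨ht, -, hb₂, hb⟩ := isReducedWord_concat_iff.1 ht
  obtain ⟨r, -, hr⟩ :=
    ((hs.1.concat (by omega) hb₂).concat ha₁ (by omega)).exists_isReducedWord_sublist
  have hra : IsReducedWord n (w * sigmaT a) (r ++ [a] ++ [a + 1]) :=
    isReducedWord_concat_iff.2 ⟨isReducedWord_concat_iff.2 ⟨hr, ha₁, by omega,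
      by simpa (disch := omega) [sigmaT_apply_of_ne]⟩, by omega, hb₂,
      by simpa (disch := omega) [sigmaT_apply_of_ne] using hb.trans ha⟩
  have hrb : IsReducedWord n (w * sigmaT (a + 1)) (r ++ [a + 1] ++ [a]) :=
    isReducedWord_concat_iff.2 ⟨isReducedWord_concat_iff.2
      ⟨by simpa [mul_assoc, sigmaT_braid] using hr, by omega, hb₂,
        by simpa (disch := omega) [sigmaT_apply_of_ne]⟩, ha₁, by omega,
      by simpa (disch := omega) [sigmaT_apply_of_ne] using hb.trans ha⟩
  have := invCount_mul_sigmaT_of_gt (n := n) ha₁ (by omega) ha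
  have := invCount_mul_sigmaT_of_gt (n := n) (by omega) hb₂ hb
  have hmove : BraidMove (r ++ [a] ++ [a + 1] ++ [a]) (r ++ [a + 1] ++ [a] ++ [a + 1]) := by
    simpa using (BraidRel.braid a).braidMove_append_left r
  exact ((braidEquiv_append_right [a] (ih _ (by omega) hs hra)).tail hmove).trans
    (braidEquiv_append_right [a + 1] (ih _ (by omega) hrb ht))

end Matsumoto

theorem braidEquiv_of_isReducedWord {n : ℕ} {w : Perm ℕ} {s t : List ℕ}
    (hs : IsReducedWord n w s) (ht : IsReducedWord n w t) : ReflTransGen BraidMove s t := by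
  induction hL : invCount n w using Nat.strong_induction_on generalizing w s t with
  | _ L ih =>
  replace ih : ∀ v, invCount n v < invCount n w →
      ∀ {s t}, IsReducedWord n v s → IsReducedWord n v t → ReflTransGen BraidMove s t :=
    fun v hv s t hs ht => ih _ (hL ▸ hv) hs ht rfl
  have hlen := (isReducedWord_iff.1 hs).2.trans (isReducedWord_iff.1 ht).2.symm
  rcases eq_nil_or_concat s with rfl | ⟨s, a, rfl⟩
  · rw [eq_nil_of_length_eq_zero hlen.symm]
  rcases eq_nil_or_concat t with rfl | ⟨t, b, rfl⟩
  · simp at hlen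
  simp only [concat_eq_append] at hs ht ⊢
  obtain ⟨hs', ha₁, ha₂, ha⟩ := isReducedWord_concat_iff.1 hs
  obtain ⟨ht', -, -, hb⟩ := isReducedWord_concat_iff.1 ht
  rcases (by omega : a = b ∨ (a + 2 ≤ b ∨ b + 2 ≤ a) ∨ b = a + 1 ∨ a = b + 1)
    with rfl | hab | rfl | rfl
  · exact braidEquiv_append_right [a]
      (ih _ (by have := invCount_mul_sigmaT_of_gt ha₁ ha₂ ha; omega) hs' ht')
  · exact braidEquiv_concat_of_comm ih hab hs ht
  · exact braidEquiv_concat_of_succ ih hs ht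
  · exact symm_of (ReflTransGen BraidMove) (braidEquiv_concat_of_succ ih ht hs)

theorem bruhatLE_iff_mem_subwordProducts {n : ℕ} {v w : Perm ℕ} {t : List ℕ}
    (ht : IsReducedWord n w t) : BruhatLE n v w ↔ v ∈ subwordProducts t := by
  constructor
  · rintro ⟨u, t', hu, ht', hut'⟩
    rw [← subwordProducts_eq_of_braidEquiv (braidEquiv_of_isReducedWord ht' ht)]
    exact mem_subwordProducts.2 ⟨u, hut', hu.1.2⟩
  · intro hv
    obtain ⟨u, hut, rfl⟩ := mem_subwordProducts.1 hv
    obtain ⟨u', hu'u, hu'⟩ := IsWord.exists_isReducedWord_sublist (w := wordProd u)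
      ⟨fun j hj => ht.1.1 j (hut.subset hj), rfl⟩
    exact ⟨u', t, hu', ht, hu'u.trans hut⟩

section Stabilizers

open scoped Pointwise

def iicStabilizer (k : ℕ) : Subgroup (Perm ℕ) := MulAction.stabilizer (Perm ℕ) (Set.Iic k)

variable {g h : Perm ℕ} {i j k : ℕ} {s : List ℕ}

lemma mem_iicStabilizer_iff : g ∈ iicStabilizer k ↔ ∀ x, g x ≤ k ↔ x ≤ k := by
  rw [iicStabilizer, MulAction.mem_stabilizer_iff, Set.ext_iff]
  simp only [Set.mem_smul_set_iff_inv_smul_mem, Set.mem_Iic, Perm.smul_def, Perm.inv_def]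
  rw [← g.forall_congr_right]
  simp only [symm_apply_apply, Iff.comm]

lemma sigmaT_mem_iicStabilizer (h : j ≠ k) : sigmaT j ∈ iicStabilizer k := by
  rw [mem_iicStabilizer_iff]
  intro x
  rw [sigmaT_apply]
  split_ifs <;> omega

lemma sigmaT_notMem_iicStabilizer : sigmaT k ∉ iicStabilizer k := by
  rw [mem_iicStabilizer_iff]
  intro h
  simpa using (h k).2 le_rfl

lemma apply_succ_eq_of_mem_iicStabilizer (h₁ : g ∈ iicStabilizer k)
    (h₂ : g ∈ iicStabilizer (k + 1)) : g (k + 1) = k + 1 := by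
  have := (mem_iicStabilizer_iff.1 h₁ (k + 1)).not
  have := mem_iicStabilizer_iff.1 h₂ (k + 1)
  omega

lemma commute_sigmaT_of_apply_eq (h₁ : g i = i) (h₂ : g (i + 1) = i + 1) :
    Commute g (sigmaT i) := by
  rw [Commute, SemiconjBy, ← mul_inv_eq_iff_eq_mul, sigmaT, ← swap_apply_apply, h₁, h₂]

lemma wordProd_mem_iicStabilizer (h : k ∉ s) : wordProd s ∈ iicStabilizer k :=
  Subgroup.list_prod_mem _ <| by
    simpa using fun j hj => sigmaT_mem_iicStabilizer (by rintro rfl; exact h hj)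

lemma wordProd_mem_iicStabilizer_iff (h : s.count k ≤ 1) :
    wordProd s ∈ iicStabilizer k ↔ k ∉ s := by
  refine ⟨fun hs hks => ?_, wordProd_mem_iicStabilizer⟩
  obtain ⟨c, d, rfl⟩ := append_of_mem hks
  have hcd : c.count k + d.count k = 0 := by simp only [count_append, count_cons_self] at h; omega
  have hc : k ∉ c := count_eq_zero.1 (by omega)
  have hd : k ∉ d := count_eq_zero.1 (by omega)
  apply sigmaT_notMem_iicStabilizer (k := k)
  have := mul_mem (mul_mem (inv_mem (wordProd_mem_iicStabilizer hc)) hs)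
    (inv_mem (wordProd_mem_iicStabilizer hd))
  simpa [mul_assoc] using this

lemma mul_sigmaT_eq_sigmaT_mul_iff
    (hsucc : g ∈ iicStabilizer (k + 1) ∧ g ∈ iicStabilizer (k + 2) ∨
      h ∈ iicStabilizer (k + 1) ∧ h ∈ iicStabilizer (k + 2))
    (hpred : g ∈ iicStabilizer k ∧ g ∈ iicStabilizer (k + 1) ∨
      h ∈ iicStabilizer k ∧ h ∈ iicStabilizer (k + 1)) :
    g * sigmaT (k + 1) = sigmaT (k + 1) * h ↔ g = h := by
  have hcomm : ∀ f, f ∈ iicStabilizer k ∧ f ∈ iicStabilizer (k + 1) →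
      f ∈ iicStabilizer (k + 1) ∧ f ∈ iicStabilizer (k + 2) → Commute f (sigmaT (k + 1)) :=
    fun f hpred hsucc => commute_sigmaT_of_apply_eq
      (apply_succ_eq_of_mem_iicStabilizer hpred.1 hpred.2)
      (apply_succ_eq_of_mem_iicStabilizer hsucc.1 hsucc.2)
  have hσ : sigmaT (k + 1) ∈ iicStabilizer k := sigmaT_mem_iicStabilizer (by omega)
  refine ⟨fun he => ?_, ?_⟩
  · have : Commute g (sigmaT (k + 1)) ∨ Commute h (sigmaT (k + 1)) := by
      rcases hsucc with hg₁ | hh₁ <;> rcases hpred with hg₀ | hh₀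
      · exact .inl (hcomm g hg₀ hg₁)
      · refine .inl (hcomm g ⟨?_, hg₁.1⟩ hg₁)
        rw [eq_mul_inv_of_mul_eq he]
        exact mul_mem (mul_mem hσ hh₀.1) (inv_mem hσ)
      · refine .inr (hcomm h ⟨?_, hh₁.1⟩ hh₁)
        rw [eq_inv_mul_of_mul_eq he.symm]
        exact mul_mem (inv_mem hσ) (mul_mem hg₀.1 hσ)
      · exact .inr (hcomm h hh₀ hh₁)
    rcases this with hc | hc
    · exact mul_left_cancel (hc.eq.symm.trans he)
    · exact mul_right_cancel (he.trans hc.eq.symm)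
  · rintro rfl
    exact (hcomm g (or_self_iff.1 hpred) (or_self_iff.1 hsucc)).eq

end Stabilizers

section Toggle

variable {a b ua ub : List ℕ} {i j : ℕ}

lemma mem_subwordProducts_append_cons {v : Perm ℕ} :
    v ∈ subwordProducts (a ++ i :: b) ↔ ∃ ua ub, ua <+ a ∧ ub <+ b ∧
      (v = wordProd (ua ++ i :: ub) ∨ v = wordProd (ua ++ ub)) := by
  simp only [mem_subwordProducts, sublist_append_iff, sublist_cons_iff]
  constructor
  · rintro ⟨_, ⟨ua, ub', rfl, hua, hub | ⟨ub, rfl, hub⟩⟩, rfl⟩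
    · exact ⟨ua, ub', hua, hub, .inr rfl⟩
    · exact ⟨ua, ub, hua, hub, .inl rfl⟩
  · rintro ⟨ua, ub, hua, hub, rfl | rfl⟩
    · exact ⟨_, ⟨ua, i :: ub, rfl, hua, .inr ⟨ub, rfl, hub⟩⟩, rfl⟩
    · exact ⟨_, ⟨ua, ub, rfl, hua, .inl hub⟩, rfl⟩

lemma wordProd_insert_notMem_iicStabilizer (hua : i ∉ ua) (hub : i ∉ ub) :
    wordProd (ua ++ i :: ub) ∉ iicStabilizer i := by
  rw [wordProd_mem_iicStabilizer_iff (by simp [count_eq_zero.2 hua, count_eq_zero.2 hub])]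
  simp

lemma wordProd_insert_mem_iicStabilizer_iff (hj : (ua ++ i :: ub).count j ≤ 1) (hji : j ≠ i) :
    wordProd (ua ++ i :: ub) ∈ iicStabilizer j ↔ wordProd (ua ++ ub) ∈ iicStabilizer j := by
  rw [wordProd_mem_iicStabilizer_iff hj, wordProd_mem_iicStabilizer_iff
    ((((sublist_cons_self i ub).append_left ua).count_le j).trans hj)]
  simp [hji]

lemma Unconfined.mem {t : List ℕ} (h : Unconfined i t) : i ∈ t :=
  count_pos_iff.1 (by rw [h.1]; exact one_pos)

lemma Unconfined.append_cons (h : Unconfined i (a ++ i :: b)) :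
    i ∉ a ∧ i ∉ b ∧ ¬(i + 1 ∈ a ∧ i + 1 ∈ b) ∧ ¬(i - 1 ∈ a ∧ i - 1 ∈ b) := by
  obtain ⟨hcount, hsplit⟩ := h
  have : a.count i + b.count i = 0 := by simp only [count_append, count_cons_self] at hcount; omega
  exact ⟨count_eq_zero.1 (by omega), count_eq_zero.1 (by omega), hsplit a b rfl⟩

lemma wordProd_insert_eq_iff (hi : 1 ≤ i) (hu : Unconfined i (a ++ i :: b)) {va vb : List ℕ}
    (hua : ua <+ a) (hva : va <+ a) (hub : ub <+ b) (hvb : vb <+ b) :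
    wordProd (ua ++ i :: ub) = wordProd (va ++ i :: vb) ↔
      wordProd (ua ++ ub) = wordProd (va ++ vb) := by
  obtain ⟨hia, hib, hsucc, hpred⟩ := hu.append_cons
  obtain ⟨k, rfl⟩ : ∃ k, i = k + 1 := ⟨i - 1, by omega⟩
  have ha : ∀ j ∉ a, (wordProd va)⁻¹ * wordProd ua ∈ iicStabilizer j := fun j hj =>
    mul_mem (inv_mem (wordProd_mem_iicStabilizer fun h => hj (hva.subset h)))
      (wordProd_mem_iicStabilizer fun h => hj (hua.subset h))
  have hb : ∀ j ∉ b, wordProd vb * (wordProd ub)⁻¹ ∈ iicStabilizer j := fun j hj =>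
    mul_mem (wordProd_mem_iicStabilizer fun h => hj (hvb.subset h))
      (inv_mem (wordProd_mem_iicStabilizer fun h => hj (hub.subset h)))
  have := mul_sigmaT_eq_sigmaT_mul_iff
    ((not_and_or.1 hsucc).imp (fun h => ⟨ha _ hia, ha _ h⟩) fun h => ⟨hb _ hib, hb _ h⟩)
    ((not_and_or.1 hpred).imp (fun h => ⟨ha _ h, ha _ hia⟩) fun h => ⟨hb _ h, hb _ hib⟩)
  rw [wordProd_append, wordProd_append, wordProd_append, wordProd_append, wordProd_cons,
    wordProd_cons, mul_mul_eq_mul_mul_iff_inv_mul_mul_eq,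
    mul_eq_mul_iff_inv_mul_eq_mul_inv (x := wordProd ua)]
  exact this

open Classical in
/-- Inserts or deletes the letter `i` in a subword of `a ++ i :: b` representing `v`
(well defined by `wordProd_insert_eq_iff`). -/
noncomputable def toggle (a b : List ℕ) (i : ℕ) (v : Perm ℕ) : Perm ℕ :=
  if h : ∃ p : List ℕ × List ℕ, p.1 <+ a ∧ p.2 <+ b ∧ wordProd (p.1 ++ i :: p.2) = v then
    wordProd (h.choose.1 ++ h.choose.2)
  else if h : ∃ p : List ℕ × List ℕ, p.1 <+ a ∧ p.2 <+ b ∧ wordProd (p.1 ++ p.2) = v then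
    wordProd (h.choose.1 ++ i :: h.choose.2)
  else v

variable (hi : 1 ≤ i) (hu : Unconfined i (a ++ i :: b))
include hi hu

lemma toggle_wordProd_insert (hua : ua <+ a) (hub : ub <+ b) :
    toggle a b i (wordProd (ua ++ i :: ub)) = wordProd (ua ++ ub) := by
  have hex : ∃ p : List ℕ × List ℕ, p.1 <+ a ∧ p.2 <+ b ∧
      wordProd (p.1 ++ i :: p.2) = wordProd (ua ++ i :: ub) := ⟨(ua, ub), hua, hub, rfl⟩
  obtain ⟨hva, hvb, hv⟩ := hex.choose_spec
  rw [toggle, dif_pos hex]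
  exact (wordProd_insert_eq_iff hi hu hva hua hvb hub).1 hv

lemma toggle_wordProd (hua : ua <+ a) (hub : ub <+ b) :
    toggle a b i (wordProd (ua ++ ub)) = wordProd (ua ++ i :: ub) := by
  obtain ⟨hia, hib, -⟩ := hu.append_cons
  have hnex : ¬∃ p : List ℕ × List ℕ, p.1 <+ a ∧ p.2 <+ b ∧
      wordProd (p.1 ++ i :: p.2) = wordProd (ua ++ ub) := by
    rintro ⟨⟨va, vb⟩, hva, hvb, hv⟩
    refine wordProd_insert_notMem_iicStabilizer (fun h => hia (hva.subset h))
      (fun h => hib (hvb.subset h)) (hv ▸ wordProd_mem_iicStabilizer ?_)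
    simpa using ⟨fun h => hia (hua.subset h), fun h => hib (hub.subset h)⟩
  have hex : ∃ p : List ℕ × List ℕ, p.1 <+ a ∧ p.2 <+ b ∧
      wordProd (p.1 ++ p.2) = wordProd (ua ++ ub) := ⟨(ua, ub), hua, hub, rfl⟩
  obtain ⟨hva, hvb, hv⟩ := hex.choose_spec
  rw [toggle, dif_neg hnex, dif_pos hex]
  exact (wordProd_insert_eq_iff hi hu hva hua hvb hub).2 hv

variable {v : Perm ℕ} (hv : v ∈ subwordProducts (a ++ i :: b))
include hv

lemma toggle_mem_subwordProducts : toggle a b i v ∈ subwordProducts (a ++ i :: b) := by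
  obtain ⟨ua, ub, hua, hub, rfl | rfl⟩ := mem_subwordProducts_append_cons.1 hv
  · rw [toggle_wordProd_insert hi hu hua hub]
    exact mem_subwordProducts_append_cons.2 ⟨ua, ub, hua, hub, .inr rfl⟩
  · rw [toggle_wordProd hi hu hua hub]
    exact mem_subwordProducts_append_cons.2 ⟨ua, ub, hua, hub, .inl rfl⟩

lemma toggle_toggle : toggle a b i (toggle a b i v) = v := by
  obtain ⟨ua, ub, hua, hub, rfl | rfl⟩ := mem_subwordProducts_append_cons.1 hv
  · rw [toggle_wordProd_insert hi hu hua hub, toggle_wordProd hi hu hua hub]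
  · rw [toggle_wordProd hi hu hua hub, toggle_wordProd_insert hi hu hua hub]

lemma toggle_mem_iicStabilizer_self_iff :
    toggle a b i v ∈ iicStabilizer i ↔ v ∉ iicStabilizer i := by
  obtain ⟨hia, hib, -⟩ := hu.append_cons
  obtain ⟨ua, ub, hua, hub, hv⟩ := mem_subwordProducts_append_cons.1 hv
  have hiua : i ∉ ua := fun h => hia (hua.subset h)
  have hiub : i ∉ ub := fun h => hib (hub.subset h)
  have hinsert := wordProd_insert_notMem_iicStabilizer hiua hiub
  have hmem : wordProd (ua ++ ub) ∈ iicStabilizer i :=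
    wordProd_mem_iicStabilizer (by simpa using ⟨hiua, hiub⟩)
  rcases hv with rfl | rfl
  · rw [toggle_wordProd_insert hi hu hua hub]
    exact iff_of_true hmem hinsert
  · rw [toggle_wordProd hi hu hua hub]
    exact iff_of_false hinsert (not_not.2 hmem)

lemma toggle_mem_iicStabilizer_iff (hj : (a ++ i :: b).count j ≤ 1) (hji : j ≠ i) :
    toggle a b i v ∈ iicStabilizer j ↔ v ∈ iicStabilizer j := by
  obtain ⟨ua, ub, hua, hub, hv⟩ := mem_subwordProducts_append_cons.1 hv
  have := wordProd_insert_mem_iicStabilizer_iff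
    (((hua.append (hub.cons_cons i)).count_le j).trans hj) hji
  rcases hv with rfl | rfl
  · rw [toggle_wordProd_insert hi hu hua hub, this]
  · rw [toggle_wordProd hi hu hua hub, this]

end Toggle

lemma exists_toggle {t : List ℕ} {i : ℕ} (hi : 1 ≤ i) (hu : Unconfined i t) :
    ∃ τ : Perm ℕ → Perm ℕ, ∀ v ∈ subwordProducts t, τ v ∈ subwordProducts t ∧ τ (τ v) = v ∧
      (τ v ∈ iicStabilizer i ↔ v ∉ iicStabilizer i) ∧
      ∀ j, t.count j ≤ 1 → j ≠ i → (τ v ∈ iicStabilizer j ↔ v ∈ iicStabilizer j) := by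
  obtain ⟨a, b, rfl⟩ := append_of_mem hu.mem
  exact ⟨toggle a b i, fun v hv => ⟨toggle_mem_subwordProducts hi hu hv, toggle_toggle hi hu hv,
    toggle_mem_iicStabilizer_self_iff hi hu hv, fun j => toggle_mem_iicStabilizer_iff hi hu hv⟩⟩

theorem two_pow_divides_ideal_card_general (n : ℕ) (w : Equiv.Perm ℕ) (d : ℕ)
    (hd : d = Set.ncard
      {i : ℕ | i ∈ supp n w ∧ ∀ s : List ℕ, IsReducedWord n w s → Unconfined i s}) :
    2 ^ d ∣ Set.ncard {v : Equiv.Perm ℕ | BruhatLE n v w} := by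
  by_cases hw : ∃ t, IsReducedWord n w t
  swap
  · have : {v | BruhatLE n v w} = ∅ :=
      Set.eq_empty_of_forall_notMem fun v ⟨_, t, _, ht, _⟩ => hw ⟨t, ht⟩
    simp [this]
  obtain ⟨t, ht⟩ := hw
  set D := {i | i ∈ supp n w ∧ ∀ s, IsReducedWord n w s → Unconfined i s}
  have hD : ∀ i ∈ D, Unconfined i t := fun i hi => hi.2 t ht
  have hfin : D.Finite := t.toFinset.finite_toSet.subset fun i hi => by simpa using (hD i hi).mem
  have hB : {v | BruhatLE n v w} = subwordProducts t :=
    Set.ext fun v => bruhatLE_iff_mem_subwordProducts ht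
  rw [hd, Set.ncard_eq_toFinset_card D hfin, hB, Set.ncard_coe_finset]
  refine two_pow_card_dvd_card_of_toggles _ _ (fun j v => v ∈ iicStabilizer j) fun i hi => ?_
  have hi := hD i (hfin.mem_toFinset.1 hi)
  obtain ⟨τ, hτ⟩ := exists_toggle (ht.1.1 i hi.mem).1 hi
  refine ⟨τ, fun v hv => (hτ v hv).imp_right <| .imp_right <| .imp_right fun h j hj => ?_⟩
  exact h j (hD j (hfin.mem_toFinset.1 hj)).1.le

/-- 2^d divides |B(w)|, where d is the number of letters unconfined in
every reduced word of w. -/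
theorem two_pow_divides_ideal_card (n : ℕ) (w : Equiv.Perm ℕ) (hw : MemSymm n w) (d : ℕ)
    (hd : d = Set.ncard
      {i : ℕ | i ∈ supp n w ∧ ∀ s : List ℕ, IsReducedWord n w s → Unconfined i s}) :
    2 ^ d ∣ Set.ncard {v : Equiv.Perm ℕ | BruhatLE n v w} :=
  two_pow_divides_ideal_card_general n w d hd
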